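/- Let q > 0 and set c(q) = (cosh q − 1)/(cosh q + 1). Let α < 0 < β with |α| ≤ q and β ≤ q, and suppose ε₁, ε₂ ∈ ℝ satisfy ε₂ − ε₁ = α + β and h(ε₁) + h(ε₂) = h(α) + h(β). Then the reflected wave is a shock, i.e. ε₁ < 0, and |ε₁| ≤ c(q)·min{|α|, β}. Moreover the amounts of shocks and of rarefactions of the incoming family decrease across the interaction: if ε₂ ≤ 0 then |ε₂| < |α|, and if ε₂ ≥ 0 then ε₂ < β. -/

import Mathlib

/-! Two elementary facts about `h` drive the argument: `h x ≤ x`, and `x ↦ h x - x` increases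
strictly up to `0` and vanishes afterwards. If `ε₁ ≥ 0`, the identities would give
`h ε₂ - ε₂ ≤ h α - α` although `ε₂ > α`; hence `ε₁ < 0`. Eliminating `ε₂` with `h ε₂ ≤ ε₂`
gives `sinh α - α ≤ h ε₁ + ε₁`, and comparing with the value of the increasing map `x ↦ h x + x`
at `c α` yields `ε₁ ≥ c α`. If the transmitted wave is a shock, `ε₁ < -c β` would make
`sinh ε₁ + sinh ε₂` smaller than `sinh α + β`; if it is a rarefaction, then `|α| ≤ β`. Both
comparisons rest on the Lipschitz constant `cosh q` of `sinh` on `[-q, q]`, and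
`(1 - c) cosh q = 1 + c` is exactly what makes them close. -/

/-- The function `h` used to parametrize rarefaction (`ε ≥ 0`) and shock (`ε < 0`)
branches of the wave curves of the isothermal p-system. -/
noncomputable def waveH (ε : ℝ) : ℝ := if 0 ≤ ε then ε else Real.sinh ε

open Real

lemma waveH_of_nonneg {x : ℝ} (hx : 0 ≤ x) : waveH x = x := if_pos hx

lemma waveH_of_nonpos {x : ℝ} (hx : x ≤ 0) : waveH x = sinh x := by
  rcases hx.lt_or_eq with hx | rfl
  · exact if_neg hx.not_ge
  · simp [waveH]

lemma waveH_lt_self {x : ℝ} (hx : x < 0) : waveH x < x := by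
  rw [waveH_of_nonpos hx.le]
  exact sinh_lt_self_iff.2 hx

lemma waveH_le_self (x : ℝ) : waveH x ≤ x := by
  rcases lt_or_ge x 0 with hx | hx
  · exact (waveH_lt_self hx).le
  · exact (waveH_of_nonneg hx).le

lemma waveH_strictMono : StrictMono waveH := by
  intro x y hxy
  rcases le_or_gt y 0 with hy | hy
  · rw [waveH_of_nonpos hy, waveH_of_nonpos (hxy.le.trans hy)]
    exact sinh_lt_sinh.2 hxy
  · rw [waveH_of_nonneg hy.le]
    exact (waveH_le_self x).trans_lt hxy

lemma waveH_sub_self_lt_of_lt {x y : ℝ} (hx : x < 0) (hxy : x < y) :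
    waveH x - x < waveH y - y := by
  rcases le_or_gt y 0 with hy | hy
  · rw [waveH_of_nonpos hy, waveH_of_nonpos hx.le]
    exact sinh_sub_id_strictMono hxy
  · rw [waveH_of_nonneg hy.le, sub_self]
    linarith [waveH_lt_self hx]

lemma sinh_sub_sinh_le {q x y : ℝ} (hxy : x ≤ y) (hx : |x| ≤ q) (hy : |y| ≤ q) :
    sinh y - sinh x ≤ cosh q * (y - x) := by
  refine (convex_Icc (-q) q).image_sub_le_mul_sub_of_deriv_le continuous_sinh.continuousOn
    differentiable_sinh.differentiableOn (fun z hz => ?_) x (abs_le.1 hx) y (abs_le.1 hy) hxy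
  rw [interior_Icc] at hz
  rw [Real.deriv_sinh, cosh_le_cosh]
  exact (abs_le.2 ⟨hz.1.le, hz.2.le⟩).trans (le_abs_self q)

noncomputable def reflectionCoeff (q : ℝ) : ℝ := (cosh q - 1) / (cosh q + 1)

lemma reflectionCoeff_nonneg (q : ℝ) : 0 ≤ reflectionCoeff q :=
  div_nonneg (by linarith [one_le_cosh q]) (by linarith [one_le_cosh q])

lemma reflectionCoeff_le_one (q : ℝ) : reflectionCoeff q ≤ 1 :=
  div_le_one_of_le₀ (by linarith) (by linarith [one_le_cosh q])

lemma one_sub_reflectionCoeff_mul_cosh (q : ℝ) :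
    (1 - reflectionCoeff q) * cosh q = 1 + reflectionCoeff q := by
  have : cosh q + 1 ≠ 0 := by linarith [one_le_cosh q]
  rw [reflectionCoeff]
  field_simp
  ring

structure WaveInteraction (α β ε₁ ε₂ : ℝ) : Prop where
  sub_eq : ε₂ - ε₁ = α + β
  waveH_add_eq : waveH ε₁ + waveH ε₂ = waveH α + waveH β

namespace WaveInteraction

variable {q α β ε₁ ε₂ : ℝ}

lemma waveH_add_sub_le (hI : WaveInteraction α β ε₁ ε₂) :
    waveH α + waveH β - (α + β) ≤ waveH ε₁ + ε₁ := by
  linarith [hI.sub_eq, hI.waveH_add_eq, waveH_le_self ε₂]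

lemma reflected_neg (hI : WaveInteraction α β ε₁ ε₂) (hα : α < 0) (hβ : 0 < β) : ε₁ < 0 := by
  by_contra! hε₁
  have hαε₂ : α < ε₂ := by linarith [hI.sub_eq]
  have := hI.waveH_add_eq
  rw [waveH_of_nonneg hβ.le, waveH_of_nonneg hε₁] at this
  linarith [hI.sub_eq, waveH_sub_self_lt_of_lt hα hαε₂]

lemma reflectionCoeff_mul_le_reflected (hI : WaveInteraction α β ε₁ ε₂) (hα : α ≤ 0)
    (hβ : 0 ≤ β) (hαq : |α| ≤ q) : reflectionCoeff q * α ≤ ε₁ := by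
  set c := reflectionCoeff q
  have hcα : α ≤ c * α := by nlinarith [reflectionCoeff_le_one q]
  have hcαq : |c * α| ≤ q := by
    rw [abs_mul, abs_of_nonneg (reflectionCoeff_nonneg q)]
    exact (mul_le_of_le_one_left (abs_nonneg α) (reflectionCoeff_le_one q)).trans hαq
  refine (waveH_strictMono.add strictMono_id).le_iff_le.1 ?_
  calc waveH (c * α) + c * α = sinh (c * α) + c * α := by
        rw [waveH_of_nonpos (mul_nonpos_of_nonneg_of_nonpos (reflectionCoeff_nonneg q) hα)]
    _ ≤ sinh α - α := by
        linear_combination sinh_sub_sinh_le hcα hαq hcαq - α * one_sub_reflectionCoeff_mul_cosh q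
    _ = waveH α + waveH β - (α + β) := by
        rw [waveH_of_nonpos hα, waveH_of_nonneg hβ]; ring
    _ ≤ waveH ε₁ + ε₁ := hI.waveH_add_sub_le

lemma neg_reflectionCoeff_mul_le_reflected (hI : WaveInteraction α β ε₁ ε₂) (hα : α ≤ 0)
    (hβ : 0 ≤ β) (hαq : |α| ≤ q) (hβq : β ≤ q) : -(reflectionCoeff q * β) ≤ ε₁ := by
  set c := reflectionCoeff q
  have hc : 0 ≤ c := reflectionCoeff_nonneg q
  have hcβ : 0 ≤ c * β := mul_nonneg hc hβ
  rcases le_or_gt 0 ε₂ with hε₂ | hε₂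
  · rcases le_or_gt 0 ε₁ with hε₁ | hε₁
    · linarith
    calc -(c * β) = c * -β := by ring
      _ ≤ c * α := mul_le_mul_of_nonneg_left (by linarith [hI.sub_eq]) hc
      _ ≤ ε₁ := hI.reflectionCoeff_mul_le_reflected hα hβ hαq
  by_contra! hε₁
  have hsinh₁ : sinh ε₁ < -(c * β) :=
    (sinh_lt_sinh.2 hε₁).trans_le (sinh_le_self_iff.2 (neg_nonpos.2 hcβ))
  have hmid : α ≤ α + (1 - c) * β := by nlinarith [reflectionCoeff_le_one q]
  have hmidq : |α + (1 - c) * β| ≤ q := abs_le.2 ⟨by linarith [neg_abs_le α], by linarith⟩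
  have hsinh₂ : sinh ε₂ < sinh α + (1 + c) * β :=
    calc sinh ε₂ < sinh (α + (1 - c) * β) := sinh_lt_sinh.2 (by linarith [hI.sub_eq])
      _ ≤ sinh α + (1 + c) * β := by
        linear_combination sinh_sub_sinh_le hmid hαq hmidq + β * one_sub_reflectionCoeff_mul_cosh q
  have := hI.waveH_add_eq
  rw [waveH_of_nonpos (by linarith), waveH_of_nonpos hε₂.le, waveH_of_nonpos hα,
    waveH_of_nonneg hβ] at this
  linarith

lemma lt_transmitted (hI : WaveInteraction α β ε₁ ε₂) (hβ : 0 < β) (hε₁ : ε₁ < 0) : α < ε₂ := by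
  refine waveH_strictMono.lt_iff_lt.1 ?_
  linarith [hI.waveH_add_eq, waveH_lt_self hε₁, waveH_of_nonneg hβ.le]

end WaveInteraction

theorem shock_rarefaction_interaction_general (q α β ε₁ ε₂ : ℝ)
    (hα : α < 0) (hβ : 0 < β) (hαq : |α| ≤ q) (hβq : β ≤ q)
    (h1 : ε₂ - ε₁ = α + β)
    (h2 : waveH ε₁ + waveH ε₂ = waveH α + waveH β) :
    ε₁ < 0 ∧
    |ε₁| ≤ (Real.cosh q - 1) / (Real.cosh q + 1) * min |α| β ∧
    (ε₂ ≤ 0 → |ε₂| < |α|) ∧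
    (0 ≤ ε₂ → ε₂ < β) := by
  have hI : WaveInteraction α β ε₁ ε₂ := ⟨h1, h2⟩
  have hε₁ : ε₁ < 0 := hI.reflected_neg hα hβ
  have hαε₂ : α < ε₂ := hI.lt_transmitted hβ hε₁
  have hαbound := hI.reflectionCoeff_mul_le_reflected hα.le hβ.le hαq
  have hβbound := hI.neg_reflectionCoeff_mul_le_reflected hα.le hβ.le hαq hβq
  refine ⟨hε₁, ?_, fun hε₂ => ?_, fun _ => by linarith⟩
  · rw [← reflectionCoeff, mul_min_of_nonneg _ _ (reflectionCoeff_nonneg q), abs_of_neg hε₁,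
      abs_of_neg hα]
    exact le_min (by linarith) (by linarith)
  · rw [abs_of_nonpos hε₂, abs_of_neg hα]
    linarith

/-- interaction of a shock `α < 0` and a rarefaction `β > 0` with
`|α| ≤ q`, `β ≤ q`: the reflected wave `ε₁` is a shock with
`|ε₁| ≤ c(q)·min{|α|, β}` where `c(q) = (cosh q − 1)/(cosh q + 1)`, and the
amounts of shocks and rarefactions of the incoming family decrease. -/
theorem shock_rarefaction_interaction (q α β ε₁ ε₂ : ℝ) (hq : 0 < q)
    (hα : α < 0) (hβ : 0 < β) (hαq : |α| ≤ q) (hβq : β ≤ q)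
    (h1 : ε₂ - ε₁ = α + β)
    (h2 : waveH ε₁ + waveH ε₂ = waveH α + waveH β) :
    ε₁ < 0 ∧
    |ε₁| ≤ (Real.cosh q - 1) / (Real.cosh q + 1) * min |α| β ∧
    (ε₂ ≤ 0 → |ε₂| < |α|) ∧
    (0 ≤ ε₂ → ε₂ < β) :=
  shock_rarefaction_interaction_general q α β ε₁ ε₂ hα hβ hαq hβq h1 h2
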